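/- arXiv:2501.07739 — 3 statements merged into one kernel-verified Lean document; each statement's English description precedes it below -/
import Mathlib

section
/- Let q be a prime power and let M be a simple GF(q)-representable paving matroid with no coloops that is not a circuit. If r(M) > q, then r(M) ≤ 2q and |E(M)| ≤ 4q. -/
namespace LoosePaper

open Set
open scoped Matroid

variable {α β : Type*}

/-- A circuit of a matroid: a minimal dependent set. -/
def Circuit (M : Matroid α) (C : Set α) : Prop :=
  M.Dep C ∧ ∀ D, M.Dep D → D ⊆ C → D = C

/-- The rank of a matroid: the (common) cardinality of its bases. -/
noncomputable def rank (M : Matroid α) : ℕ :=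
  sInf {n | ∃ B, M.IsBase B ∧ B.ncard = n}

/-- An element is loose if every circuit containing it has size at least the rank. -/
def Loose (M : Matroid α) (e : α) : Prop :=
  e ∈ M.E ∧ ∀ C, Circuit M C → e ∈ C → rank M ≤ C.ncard

/-- An element is free if every circuit containing it is spanning. -/
def FreeElt (M : Matroid α) (e : α) : Prop :=
  e ∈ M.E ∧ ∀ C, Circuit M C → e ∈ C → M.closure C = M.E

/-- A coloop: an element contained in every base. -/
def Coloop (M : Matroid α) (e : α) : Prop :=
  e ∈ M.E ∧ ∀ B, M.IsBase B → e ∈ B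

def NoColoops (M : Matroid α) : Prop := ∀ e, ¬ Coloop M e

/-- A matroid is simple if every pair of its elements is independent. -/
def Simple (M : Matroid α) : Prop :=
  ∀ e ∈ M.E, ∀ f ∈ M.E, M.Indep {e, f}

/-- A matroid is paving if every circuit has size at least the rank. -/
def Paving (M : Matroid α) : Prop :=
  ∀ C, Circuit M C → rank M ≤ C.ncard

/-- `M` is representable over the field `F`. -/
def Representable (M : Matroid α) (F : Type*) [Field F] : Prop :=
  ∃ (ι : Type) (v : α → ι → F),
    ∀ I, I ⊆ M.E → (M.Indep I ↔ LinearIndependent F (fun x : I => v x.1))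

/-- `N` is the vector matroid, on ground set all of `η`, of the matrix whose
column labelled by `c : η` is `A c`. -/
def IsVectorMatroidOn (F : Type*) [Field F] {η ι : Type*} (A : η → ι → F)
    (N : Matroid η) : Prop :=
  N.E = Set.univ ∧ ∀ I : Set η, (N.Indep I ↔ LinearIndependent F (fun x : I => A x.1))

/-- `φ` is an isomorphism from `M` to `N`. -/
def IsIsoTo (M : Matroid α) (N : Matroid β) (φ : α → β) : Prop :=
  Set.BijOn φ M.E N.E ∧ ∀ I, I ⊆ M.E → (M.Indep I ↔ N.Indep (φ '' I))

/-- The matrix `[I_r | D]` of the matroid `M_r`; the column `Sum.inl i` is the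
`i`-th standard basis vector, the column `Sum.inr 0` (the distinguished element `z`)
is the all-ones vector, and for `1 ≤ j ≤ r-1` the column `Sum.inr j` has ones
exactly in rows `0` and `j` (`0`-indexed). -/
def MrMatrix (r : ℕ) : (Fin r ⊕ Fin r) → Fin r → ZMod 2
  | Sum.inl i => fun k => if k = i then 1 else 0
  | Sum.inr j => fun k =>
      if j.val = 0 then 1 else if k.val = 0 ∨ k = j then 1 else 0

/-- The matrix `[I_r | D]` of the matroid `N_r`; the column `Sum.inr 0`
(the distinguished element `z`) is `(0,1,…,1)ᵀ`, and for `1 ≤ j ≤ r-2` the column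
`Sum.inr j` has ones exactly in rows `0`, `1` and `j+1` (`0`-indexed). -/
def NrMatrix (r : ℕ) : (Fin r ⊕ Fin (r - 1)) → Fin r → ZMod 2
  | Sum.inl i => fun k => if k = i then 1 else 0
  | Sum.inr j => fun k =>
      if j.val = 0 then (if k.val = 0 then 0 else 1)
      else if k.val = 0 ∨ k.val = 1 ∨ k.val = j.val + 1 then 1 else 0

/-- The matrix `[I_r | D]` of the matroid `L_r`; the columns of `D` are the all-ones
vector, `(1,1,0,…,0)ᵀ`, `(1,0,1,0,…,0)ᵀ` and `(0,1,1,0,…,0)ᵀ`. -/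
def LrMatrix (r : ℕ) : (Fin r ⊕ Fin 4) → Fin r → ZMod 2
  | Sum.inl i => fun k => if k = i then 1 else 0
  | Sum.inr j => fun k =>
      if j = 0 then 1
      else if j = 1 then (if k.val = 0 ∨ k.val = 1 then 1 else 0)
      else if j = 2 then (if k.val = 0 ∨ k.val = 2 then 1 else 0)
      else if k.val = 1 ∨ k.val = 2 then 1 else 0

/-- The matrix `[I_r | D]` of the matroid `J_r`; the columns of `D` are
`(0,1,1,…,1)ᵀ`, `(1,1,1,0,…,0)ᵀ`, `(1,1,0,1,0,…,0)ᵀ` and `(1,0,1,1,0,…,0)ᵀ`. -/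
def JrMatrix (r : ℕ) : (Fin r ⊕ Fin 4) → Fin r → ZMod 2
  | Sum.inl i => fun k => if k = i then 1 else 0
  | Sum.inr j => fun k =>
      if j = 0 then (if k.val = 0 then 0 else 1)
      else if j = 1 then (if k.val = 0 ∨ k.val = 1 ∨ k.val = 2 then 1 else 0)
      else if j = 2 then (if k.val = 0 ∨ k.val = 1 ∨ k.val = 3 then 1 else 0)
      else if k.val = 0 ∨ k.val = 2 ∨ k.val = 3 then 1 else 0

/-- A matrix over `GF(3)` whose vector matroid is `U_{2,4}`. -/
def U24Matrix : Fin 4 → Fin 2 → ZMod 3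
  | 0 => fun k => if k = 0 then 1 else 0
  | 1 => fun k => if k = 1 then 1 else 0
  | 2 => fun _ => 1
  | 3 => fun k => if k = 0 then 1 else 2

/-- A `GF(3)`-matrix representing the matroid obtained from a circuit
`{e, c_0, …, c_{n-1}}` (where `e` is the element `Sum.inl ()`) by 2-summing a copy
of `U_{2,4}` across each element `c_d` with `d ∈ D`.  For `d ∉ D` the element
`Sum.inr (d, 0)` is `c_d`, and for `d ∈ D` the elements `Sum.inr (d, j)`,
`j = 0, 1, 2`, are the three elements of the copy of `U_{2,4}` other than its
basepoint. -/
def thetaMatrix (n : ℕ) (D : Finset (Fin n)) :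
    (Unit ⊕ Fin n × Fin 3) → (Fin n ⊕ Fin n) → ZMod 3
  | Sum.inl _ => fun row => Sum.elim (fun _ => 1) (fun _ => 0) row
  | Sum.inr (d, j) => fun row =>
      let ed : (Fin n ⊕ Fin n) → ZMod 3 :=
        Sum.elim (fun i => if i = d then 1 else 0) (fun _ => 0)
      let wd : (Fin n ⊕ Fin n) → ZMod 3 :=
        Sum.elim (fun _ => 0) (fun i => if i = d then 1 else 0)
      if d ∈ D then
        (if j = 0 then wd row else if j = 1 then ed row + wd row else ed row - wd row)
      else ed row

/-- The ground set of the 2-sum construction: the circuit element `e`, the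
untouched circuit elements `c_d` for `d ∉ D`, and three `U_{2,4}`-elements for
each `d ∈ D`. -/
def thetaGround (n : ℕ) (D : Finset (Fin n)) : Set (Unit ⊕ Fin n × Fin 3) :=
  {x | ∀ d : Fin n, ∀ j : Fin 3, x = Sum.inr (d, j) → (j = 0 ∨ d ∈ D)}

/-!
Let `v` represent `M` over `F = GF(q)` and let `r = r(M)`. Take an independent set `T` and
elements `z₀ ≠ z₁` outside it with `T + zᵢ` dependent, and let `l₀, l₁` be linear dependencies
of `v` supported on `T + z₀`, `T + z₁` with `lᵢ zᵢ = 1`. The `q + 1` lines `a l₀ + c l₁` of the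
pencil they span are nonzero dependencies, hence (`M` being paving) have at least `r` nonzero
entries each, whereas every coordinate is nonzero on at most `q` of these lines. Double counting
gives `(q + 1) r ≤ q (|T| + 2)`. For `T` a base (two elements outside a base exist as `M` has no
coloops and is not a circuit) this is `r ≤ 2q`; for `|T| = r - 1` it shows that once `r > q`,
every non-spanning set has at most `r` elements.

Dually, let `φ₁, φ₂` be coordinate functionals for two elements `b₁, b₂` of a base `B`. Each
functional `a φ₁ + c φ₂` vanishes on a non-spanning set, so is nonzero on at least `|E| - r`
elements, and all of them vanish on `B \ {b₁, b₂}`. The same double count on the remaining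
`|E| - r + 2` elements gives `|E| - r ≤ 2q`.
-/

theorem exists_linearCombination_eq_zero_of_mem_span {R V : Type*} [Ring R] [AddCommGroup V]
    [Module R V] {v : α → V} {T : Set α} {z : α} (hz : z ∉ T)
    (h : v z ∈ Submodule.span R (v '' T)) :
    ∃ l : α →₀ R, l ∈ Finsupp.supported R R (insert z T) ∧ l z = 1 ∧
      Finsupp.linearCombination R v l = 0 := by
  obtain ⟨c, hcT, hc⟩ := (Finsupp.mem_span_image_iff_linearCombination R).mp h
  refine ⟨Finsupp.single z 1 - c, sub_mem ?_ (Finsupp.supported_mono (Set.subset_insert z T) hcT),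
    ?_, by simp [hc]⟩
  · exact Finsupp.single_mem_supported R 1 (Set.mem_insert z T)
  · simp [(Finsupp.mem_supported' R c).mp hcT z hz]

theorem exists_dual_apply_ne_zero_of_linearIndepOn {F W : Type*} [Field F] [AddCommGroup W]
    [Module F W] {v : α → W} {B : Set α} (hB : LinearIndepOn F v B) {b : α} (hb : b ∈ B) :
    ∃ φ : Module.Dual F W, φ (v b) ≠ 0 ∧ ∀ x ∈ B, x ≠ b → φ (v x) = 0 := by
  obtain ⟨φ, hφb, hφ⟩ :=
    Submodule.exists_dual_map_eq_bot_of_notMem (hB.notMem_span hb) inferInstance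
  refine ⟨φ, hφb, fun x hx hxb ↦ ?_⟩
  have : φ (v x) ∈ (Submodule.span F (v '' (B \ {b}))).map φ :=
    Submodule.mem_map_of_mem (Submodule.subset_span ⟨x, ⟨hx, hxb⟩, rfl⟩)
  rwa [hφ, Submodule.mem_bot] at this

open Finset in
/-- A Plotkin bound for the code spanned by `u` and `w`: each coordinate `x` vanishes on one of the
`Fintype.card F + 1` directions `(1, l)`, `(0, 1)` of the pencil. -/
theorem card_add_one_mul_le_of_pencil {F : Type*} [Field F] [Fintype F] [DecidableEq F]
    (S : Finset α) (u w : α → F) (N : ℕ)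
    (h : ∀ a b : F, (a, b) ≠ 0 → N ≤ #{x ∈ S | a * u x + b * w x ≠ 0}) :
    (Fintype.card F + 1) * N ≤ #S * Fintype.card F := by
  let d : Option F → F × F := fun p ↦ p.elim (0, 1) (1, ·)
  let word (p : Option F) (x : α) : F := (d p).1 * u x + (d p).2 * w x
  have hd (p : Option F) : d p ≠ 0 := by cases p <;> simp [d]
  have hkill (x : α) : ∃ p, word p x = 0 := by
    by_cases hw : w x = 0
    · exact ⟨none, by simp [word, d, hw]⟩
    · exact ⟨some (-u x / w x), by simp [word, d, div_mul_cancel₀ _ hw]⟩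
  have hcoord (x : α) : #{p | word p x ≠ 0} ≤ Fintype.card F := by
    obtain ⟨p, hp⟩ := hkill x
    have := Finset.card_lt_card <|
      filter_ssubset (p := fun p ↦ word p x ≠ 0) |>.mpr ⟨p, mem_univ p, not_not.mpr hp⟩
    rwa [card_univ, Fintype.card_option, Nat.lt_succ_iff] at this
  calc (Fintype.card F + 1) * N = ∑ _p : Option F, N := by simp
    _ ≤ ∑ p : Option F, #{x ∈ S | word p x ≠ 0} := sum_le_sum fun p _ ↦ h _ _ (hd p)
    _ = ∑ x ∈ S, #{p | word p x ≠ 0} :=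
      sum_card_bipartiteAbove_eq_sum_card_bipartiteBelow (fun p x ↦ word p x ≠ 0)
    _ ≤ ∑ _x ∈ S, Fintype.card F := sum_le_sum fun x _ ↦ hcoord x
    _ = #S * Fintype.card F := by simp

section

open Finset

variable {M : Matroid α} {B : Set α}

theorem circuit_iff_isCircuit {C : Set α} : Circuit M C ↔ M.IsCircuit C :=
  Matroid.isCircuit_iff.symm

theorem rank_eq_ncard (hB : M.IsBase B) : rank M = B.ncard :=
  le_antisymm (Nat.sInf_le ⟨B, hB, rfl⟩) <|
    le_csInf ⟨_, B, hB, rfl⟩ fun _ ⟨_, hB', h⟩ ↦ h ▸ (hB'.ncard_eq_ncard_of_isBase hB).ge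

theorem exists_isBase_finset (hr : 0 < rank M) :
    ∃ B : Finset α, M.IsBase ↑B ∧ #B = rank M := by
  obtain ⟨B, hB⟩ := M.exists_isBase
  have hfin : B.Finite := Set.finite_of_ncard_pos (rank_eq_ncard hB ▸ hr)
  exact ⟨hfin.toFinset, by simpa, by rw [rank_eq_ncard hB, Set.ncard_eq_toFinset_card B hfin]⟩

theorem isBase_of_indep_of_rank_le_card (hr : 0 < rank M) {I : Finset α} (hI : M.Indep ↑I)
    (hIr : rank M ≤ #I) : M.IsBase ↑I := by
  obtain ⟨B, hB, hIB⟩ := hI.exists_isBase_superset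
  have hfin : B.Finite := Set.finite_of_ncard_pos (rank_eq_ncard hB ▸ hr)
  rwa [Set.eq_of_subset_of_ncard_le hIB (by rwa [← rank_eq_ncard hB, Set.ncard_coe_finset]) hfin]

theorem notMem_of_dep_insert {I : Set α} {z : α} (hI : M.Indep I) (hzI : M.Dep (insert z I)) :
    z ∉ I :=
  fun h ↦ hzI.not_indep (by rwa [Set.insert_eq_of_mem h])

theorem Paving.rank_le_card_of_dep (hP : Paving M) {D : Finset α} (hD : M.Dep ↑D) :
    rank M ≤ #D := by
  obtain ⟨C, hCD, hC⟩ := hD.exists_isCircuit_subset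
  calc rank M ≤ C.ncard := hP C (circuit_iff_isCircuit.mpr hC)
    _ ≤ (D : Set α).ncard := Set.ncard_le_ncard hCD D.finite_toSet
    _ = #D := Set.ncard_coe_finset D

theorem Paving.indep_of_card_lt (hP : Paving M) {I : Finset α} (hIE : ↑I ⊆ M.E)
    (hI : #I < rank M) : M.Indep ↑I := by
  by_contra hdep
  exact (hP.rank_le_card_of_dep ⟨hdep, hIE⟩).not_gt hI

theorem nontrivial_ground_diff_of_isBase (hB : M.IsBase B) (hBne : B.Nonempty)
    (hcoloop : ∀ e, ¬ M.IsColoop e) (hcircuit : ¬ M.IsCircuit M.E) : (M.E \ B).Nontrivial := by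
  by_contra h
  obtain hempty | ⟨e, he⟩ := Set.not_nontrivial_iff.mp h |>.eq_empty_or_singleton
  · have hEB : M.E = B := hB.subset_ground.antisymm' (Set.sdiff_eq_empty.mp hempty)
    obtain ⟨b, hb⟩ := hBne
    refine hcoloop b (Matroid.isColoop_iff_forall_mem_isBase.mpr fun B' hB' ↦ ?_)
    rwa [hB'.eq_of_subset_isBase hB (hEB ▸ hB'.subset_ground)]
  · have heE : e ∈ M.E \ B := he ▸ rfl
    have hEeB : M.E = insert e B := by
      rw [← Set.union_sdiff_cancel hB.subset_ground, he, Set.union_singleton]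
    have hC := hB.fundCircuit_isCircuit heE.1 heE.2
    obtain ⟨x, hxE, hxC⟩ : ∃ x ∈ M.E, x ∉ M.fundCircuit e B := by
      by_contra! hsub
      exact hcircuit (hC.subset_ground.antisymm hsub ▸ hC)
    refine hcoloop x ((Matroid.isColoop_iff_forall_notMem_isCircuit hxE).mpr fun C' hC' hxC' ↦ ?_)
    rw [hC'.eq_fundCircuit_of_subset hB.indep (hEeB ▸ hC'.subset_ground)] at hxC'
    exact hxC hxC'

end

def IsRepresentation (F : Type*) {W : Type*} [Field F] [AddCommGroup W] [Module F W]
    (M : Matroid α) (v : α → W) : Prop :=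
  ∀ I, I ⊆ M.E → (M.Indep I ↔ LinearIndepOn F v I)

namespace IsRepresentation

variable {F W : Type*} [Field F] [AddCommGroup W] [Module F W] {M : Matroid α} {v : α → W}

theorem mem_span_of_dep_insert (hv : IsRepresentation F M v) {I : Set α} {z : α}
    (hI : M.Indep I) (hzI : M.Dep (insert z I)) : v z ∈ Submodule.span F (v '' I) := by
  by_contra hz
  refine hzI.not_indep ((hv _ hzI.subset_ground).mpr ?_)
  exact (linearIndepOn_insert (notMem_of_dep_insert hI hzI)).mpr ⟨(hv I hI.subset_ground).mp hI, hz⟩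

theorem mem_span_of_isBase (hv : IsRepresentation F M v) {B : Set α} (hB : M.IsBase B)
    {x : α} (hx : x ∈ M.E) : v x ∈ Submodule.span F (v '' B) := by
  by_cases hxB : x ∈ B
  · exact Submodule.subset_span (Set.mem_image_of_mem v hxB)
  · exact hv.mem_span_of_dep_insert hB.indep (hB.insert_dep ⟨hx, hxB⟩)

theorem dep_support (hv : IsRepresentation F M v) {l : α →₀ F} (hl : l ≠ 0)
    (hlE : ↑l.support ⊆ M.E) (hlv : Finsupp.linearCombination F v l = 0) : M.Dep ↑l.support := by
  refine ⟨fun hind ↦ hl ?_, hlE⟩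
  exact linearIndepOn_iff.mp ((hv _ hlE).mp hind) l (Finsupp.mem_supported_support F l) hlv

end IsRepresentation

namespace Paving

open Finset

variable {F W : Type*} [Field F] [Fintype F] [AddCommGroup W] [Module F W]
  {M : Matroid α} {v : α → W}

theorem card_add_one_mul_rank_le (hP : Paving M) (hv : IsRepresentation F M v) {S : Finset α}
    (hSE : ↑S ⊆ M.E) {l₀ l₁ : α →₀ F} (hl₀S : l₀ ∈ Finsupp.supported F F ↑S)
    (hl₁S : l₁ ∈ Finsupp.supported F F ↑S) (hl₀ : Finsupp.linearCombination F v l₀ = 0)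
    (hl₁ : Finsupp.linearCombination F v l₁ = 0) (hind : LinearIndependent F ![l₀, l₁]) :
    (Fintype.card F + 1) * rank M ≤ #S * Fintype.card F := by
  classical
  refine card_add_one_mul_le_of_pencil S l₀ l₁ _ fun a b hab ↦ ?_
  set l := a • l₀ + b • l₁
  have hlS : ↑l.support ⊆ (S : Set α) :=
    (Finsupp.mem_supported F l).mp <|
      add_mem (Submodule.smul_mem _ a hl₀S) (Submodule.smul_mem _ b hl₁S)
  have hl : l ≠ 0 := fun h ↦ hab <| by
    obtain ⟨rfl, rfl⟩ := LinearIndependent.pair_iff.mp hind a b h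
    rfl
  have hlv : Finsupp.linearCombination F v l = 0 := by simp [l, hl₀, hl₁]
  calc rank M ≤ #l.support := hP.rank_le_card_of_dep (hv.dep_support hl (hlS.trans hSE) hlv)
    _ ≤ _ := card_le_card fun x hx ↦ mem_filter.mpr ⟨hlS hx, by simpa [l] using hx⟩

theorem card_add_one_mul_rank_le_of_insert_dep (hP : Paving M) (hv : IsRepresentation F M v)
    {T : Finset α} (hT : M.Indep ↑T) {z₀ z₁ : α} (hz : z₀ ≠ z₁) (hz₀ : M.Dep (insert z₀ ↑T))
    (hz₁ : M.Dep (insert z₁ ↑T)) :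
    (Fintype.card F + 1) * rank M ≤ (#T + 2) * Fintype.card F := by
  classical
  have hz₀T : z₀ ∉ T := notMem_of_dep_insert hT hz₀
  have hz₁T : z₁ ∉ T := notMem_of_dep_insert hT hz₁
  obtain ⟨l₀, hl₀T, hl₀z₀, hl₀⟩ :=
    exists_linearCombination_eq_zero_of_mem_span hz₀T (hv.mem_span_of_dep_insert hT hz₀)
  obtain ⟨l₁, hl₁T, hl₁z₁, hl₁⟩ :=
    exists_linearCombination_eq_zero_of_mem_span hz₁T (hv.mem_span_of_dep_insert hT hz₁)
  have hl₀z₁ : l₀ z₁ = 0 := (Finsupp.mem_supported' F l₀).mp hl₀T z₁ (by simp [hz.symm, hz₁T])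
  have hl₁z₀ : l₁ z₀ = 0 := (Finsupp.mem_supported' F l₁).mp hl₁T z₀ (by simp [hz, hz₀T])
  have hind : LinearIndependent F ![l₀, l₁] := LinearIndependent.pair_iff.mpr fun s t hst ↦ by
    have h₀ := DFunLike.congr_fun hst z₀
    have h₁ := DFunLike.congr_fun hst z₁
    simp only [Finsupp.coe_add, Finsupp.coe_smul, Pi.add_apply, Pi.smul_apply, smul_eq_mul,
      Finsupp.coe_zero, Pi.zero_apply, hl₀z₀, hl₁z₀, hl₀z₁, hl₁z₁, mul_one, mul_zero, add_zero,
      zero_add] at h₀ h₁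
    exact ⟨h₀, h₁⟩
  set S := insert z₀ (insert z₁ T)
  have hS : #S = #T + 2 := by
    rw [card_insert_of_notMem (by simp [hz, hz₀T]), card_insert_of_notMem hz₁T]
  have hSE : ↑S ⊆ M.E := by
    simpa [S, Set.insert_subset_iff] using
      ⟨hz₀.subset_ground (Set.mem_insert _ _), hz₁.subset_ground (Set.mem_insert _ _),
        hT.subset_ground⟩
  have hTS (z : α) (hz : z ∈ S) : insert z (T : Set α) ⊆ S := by
    simp_all [S, Set.subset_def]
  rw [← hS]
  exact hP.card_add_one_mul_rank_le hv hSE (Finsupp.supported_mono (hTS z₀ (by simp [S])) hl₀T)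
    (Finsupp.supported_mono (hTS z₁ (by simp [S])) hl₁T) hl₀ hl₁ hind

theorem rank_le_two_mul (hP : Paving M) (hv : IsRepresentation F M v) (hr : 0 < rank M)
    (hcoloop : ∀ e, ¬ M.IsColoop e) (hcircuit : ¬ M.IsCircuit M.E) :
    rank M ≤ 2 * Fintype.card F := by
  obtain ⟨B, hB, hBr⟩ := exists_isBase_finset hr
  obtain ⟨e, he, f, hf, hef⟩ :=
    nontrivial_ground_diff_of_isBase hB (by simpa using card_pos.mp (hBr ▸ hr)) hcoloop hcircuit
  have := hP.card_add_one_mul_rank_le_of_insert_dep hv hB.indep hef (hB.insert_dep he)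
    (hB.insert_dep hf)
  rw [hBr] at this
  nlinarith

theorem card_le_rank_of_not_spanning (hP : Paving M) (hv : IsRepresentation F M v)
    (hq : Fintype.card F < rank M) {Z : Finset α} (hZE : ↑Z ⊆ M.E) (hZ : ¬ M.Spanning ↑Z) :
    #Z ≤ rank M := by
  classical
  by_contra! hZr
  obtain ⟨Z', hZ'Z, hZ'⟩ := exists_subset_card_eq (show rank M + 1 ≤ #Z by omega)
  obtain ⟨T, hTZ', hT⟩ := exists_subset_card_eq (show rank M - 1 ≤ #Z' by omega)
  obtain ⟨z₀, z₁, hz, hZ'T⟩ :=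
    card_eq_two.mp (show #(Z' \ T) = 2 by rw [card_sdiff_of_subset hTZ']; omega)
  have hTZ : T ⊆ Z := hTZ'.trans hZ'Z
  have hTind : M.Indep ↑T :=
    hP.indep_of_card_lt ((coe_subset.mpr hTZ).trans hZE) (by omega)
  have hdep (z : α) (hz : z ∈ Z' \ T) : M.Dep (insert z ↑T) := by
    have hzT : z ∉ T := (mem_sdiff.mp hz).2
    have hsub : insert z T ⊆ Z := insert_subset (hZ'Z (mem_sdiff.mp hz).1) hTZ
    have hsubE : (↑(insert z T) : Set α) ⊆ M.E := (coe_subset.mpr hsub).trans hZE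
    refine ⟨fun hind ↦ hZ ?_, by simpa using hsubE⟩
    have hB : M.IsBase ↑(insert z T) := isBase_of_indep_of_rank_le_card (by omega)
      (by simpa using hind) (by rw [card_insert_of_notMem hzT]; omega)
    exact hB.spanning.superset (coe_subset.mpr hsub) hZE
  have := hP.card_add_one_mul_rank_le_of_insert_dep hv hTind hz (hdep z₀ (by simp [hZ'T]))
    (hdep z₁ (by simp [hZ'T]))
  rw [hT, show rank M - 1 + 2 = rank M + 1 by omega] at this
  nlinarith

theorem card_le_rank_of_forall_apply_eq_zero (hP : Paving M) (hv : IsRepresentation F M v)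
    (hq : Fintype.card F < rank M) {Z : Finset α} (hZE : ↑Z ⊆ M.E) {ψ : Module.Dual F W}
    (hZ : ∀ x ∈ Z, ψ (v x) = 0) {b : α} (hb : b ∈ M.E) (hψb : ψ (v b) ≠ 0) : #Z ≤ rank M := by
  refine hP.card_le_rank_of_not_spanning hv hq hZE fun hsp ↦ hψb ?_
  obtain ⟨B, hB, hBZ⟩ := (Matroid.spanning_iff_exists_isBase_subset hZE).mp hsp
  have hker : Submodule.span F (v '' B) ≤ LinearMap.ker ψ :=
    Submodule.span_le.mpr <| by
      rintro _ ⟨x, hx, rfl⟩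
      exact hZ x (hBZ hx)
  exact hker (hv.mem_span_of_isBase hB hb)

theorem card_sub_rank_le_card_filter_apply_ne_zero [DecidableEq F] (hP : Paving M)
    (hv : IsRepresentation F M v) (hq : Fintype.card F < rank M) {E : Finset α} (hE : ↑E = M.E)
    {ψ : Module.Dual F W} {b : α} (hb : b ∈ M.E) (hψb : ψ (v b) ≠ 0) :
    #E - rank M ≤ #{x ∈ E | ψ (v x) ≠ 0} := by
  have hZ : #{x ∈ E | ψ (v x) = 0} ≤ rank M :=
    hP.card_le_rank_of_forall_apply_eq_zero hv hq (hE ▸ coe_subset.mpr (filter_subset _ E))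
      (fun x hx ↦ (mem_filter.mp hx).2) hb hψb
  have := card_filter_add_card_filter_not (s := E) (p := fun x ↦ ψ (v x) = 0)
  simp only [← ne_eq] at this
  omega

theorem ncard_ground_le (hP : Paving M) (hv : IsRepresentation F M v)
    (hq : Fintype.card F < rank M) : M.E.ncard ≤ rank M + 2 * Fintype.card F := by
  classical
  obtain hinf | hfin := M.E.infinite_or_finite
  · simp [hinf.ncard]
  have h2 : 2 ≤ rank M := by have : 1 < Fintype.card F := Fintype.one_lt_card; omega
  obtain ⟨B, hB, hBr⟩ := exists_isBase_finset (M := M) (by omega)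
  obtain ⟨b₁, hb₁, b₂, hb₂, hb⟩ := one_lt_card.mp (show 1 < #B by omega)
  have hBind : LinearIndepOn F v ↑B := (hv _ hB.subset_ground).mp hB.indep
  obtain ⟨φ₁, hφ₁, hφ₁B⟩ := exists_dual_apply_ne_zero_of_linearIndepOn hBind hb₁
  obtain ⟨φ₂, hφ₂, hφ₂B⟩ := exists_dual_apply_ne_zero_of_linearIndepOn hBind hb₂
  set E := hfin.toFinset
  have hBE : B ⊆ E := fun x hx ↦ by simpa [E] using hB.subset_ground hx
  set S := E \ (B \ {b₁, b₂})
  have hS : #S = #E - rank M + 2 := by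
    have h12 : {b₁, b₂} ⊆ B := insert_subset hb₁ (singleton_subset_iff.mpr hb₂)
    rw [card_sdiff_of_subset (sdiff_subset.trans hBE), card_sdiff_of_subset h12, card_pair hb]
    have := Finset.card_le_card hBE
    omega
  have hweight (a c : F) (hac : (a, c) ≠ 0) :
      #E - rank M ≤ #{x ∈ S | a * φ₁ (v x) + c * φ₂ (v x) ≠ 0} := by
    set ψ := a • φ₁ + c • φ₂
    obtain ⟨b, hb, hψb⟩ : ∃ b ∈ M.E, ψ (v b) ≠ 0 := by
      by_cases ha : a = 0
      · refine ⟨b₂, hB.subset_ground hb₂, ?_⟩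
        simpa [ψ, ha, hφ₁B b₂ hb₂ (Ne.symm hb), hφ₂] using hac
      · exact ⟨b₁, hB.subset_ground hb₁, by simp [ψ, ha, hφ₂B b₁ hb₁ hb, hφ₁]⟩
    refine (hP.card_sub_rank_le_card_filter_apply_ne_zero hv hq hfin.coe_toFinset hb hψb).trans
      (card_le_card fun x hx ↦ ?_)
    obtain ⟨hxE, hx⟩ := mem_filter.mp hx
    refine mem_filter.mpr ⟨mem_sdiff.mpr ⟨hxE, fun hxB ↦ hx ?_⟩, by simpa [ψ] using hx⟩
    obtain ⟨hxB, hx₁₂⟩ := mem_sdiff.mp hxB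
    simp only [Finset.mem_insert, Finset.mem_singleton, not_or] at hx₁₂
    simp [ψ, hφ₁B x hxB hx₁₂.1, hφ₂B x hxB hx₁₂.2]
  have := card_add_one_mul_le_of_pencil S (fun x ↦ φ₁ (v x)) (fun x ↦ φ₂ (v x)) _ hweight
  rw [hS] at this
  have : #E - rank M ≤ 2 * Fintype.card F := by nlinarith
  have hEcard : M.E.ncard = #E := Set.ncard_eq_toFinset_card _ hfin
  omega

end Paving

theorem rajpal_paving_bound_general {α : Type*} (q : ℕ) (F : Type) [Field F] [Fintype F]
    (hq : Fintype.card F = q) (M : Matroid α)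
    (hrep : Representable M F) (hpaving : Paving M) (hcoloops : NoColoops M)
    (hnotcircuit : ¬ Circuit M M.E) (hrank : q < rank M) :
    rank M ≤ 2 * q ∧ M.E.ncard ≤ 4 * q := by
  obtain ⟨ι, v, hv⟩ := hrep
  subst hq
  have hcoloop (e : α) : ¬ M.IsColoop e :=
    fun he ↦ hcoloops e ⟨he.mem_ground, fun _ hB ↦ he.mem_of_isBase hB⟩
  have hr := hpaving.rank_le_two_mul (F := F) hv (by omega) hcoloop
    (circuit_iff_isCircuit.not.mp hnotcircuit)
  have hE := hpaving.ncard_ground_le hv hrank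
  omega

/-- Rajpal's theorem: if `M` is a simple `GF(q)`-representable
paving matroid with no coloops that is not a circuit and `r(M) > q`, then
`r(M) ≤ 2q` and `|E(M)| ≤ 4q`. -/
theorem rajpal_paving_bound {α : Type*} (q : ℕ) (F : Type) [Field F] [Fintype F]
    (hq : Fintype.card F = q) (M : Matroid α) (hsimple : Simple M)
    (hrep : Representable M F) (hpaving : Paving M) (hcoloops : NoColoops M)
    (hnotcircuit : ¬ Circuit M M.E) (hrank : q < rank M) :
    rank M ≤ 2 * q ∧ M.E.ncard ≤ 4 * q :=
  rajpal_paving_bound_general q F hq M hrep hpaving hcoloops hnotcircuit hrank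

end LoosePaper
end

section
/- Let q be a prime power and let M be a simple GF(q)-representable paving matroid with no coloops. Then r(M) ≤ q, or M is sparse paving. -/
/-!
Suppose `r(M) > q` and some cocircuit `C` of `M` has fewer than `r(M*) = |E| - r` elements.
Its complement is a nonspanning set containing `r + 1` points: every `r` of them are
dependent, while every `r - 1` of them are independent because `M` is paving. So in the
representation a nonzero linear dependency among these `r + 1` vectors never vanishes at two
of the points, yet at each point some nonzero dependency vanishes. The ratio of two
non-proportional dependencies then maps the `r + 1` points injectively into the projective
line over `GF(q)`, so `r + 1 ≤ q + 1`.
-/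

namespace LoosePaper

open Set
open scoped Matroid

variable {α β : Type*}

section Dependencies

variable {F : Type*} [Field F]

lemma injOn_ratio [DecidableEq F] {K : Submodule F (α →₀ F)} {T : Set α}
    (hsep : ∀ u ∈ K, ∀ i ∈ T, ∀ j ∈ T, i ≠ j → u i = 0 → u j = 0 → u = 0)
    {c c' : α →₀ F} (hc : c ∈ K) (hc' : c' ∈ K) (hc'0 : c' ≠ 0)
    (hnprop : ∀ t : F, c ≠ t • c') :
    Set.InjOn (fun x => if c' x = 0 then none else some (c x / c' x)) T := by
  intro x hx y hy hxy
  by_contra hne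
  by_cases hx0 : c' x = 0
  · have hy0 : c' y = 0 := by
      by_contra hy0
      simp only [hx0, hy0, if_true, if_false, reduceCtorEq] at hxy
    exact hc'0 (hsep c' hc' x hx y hy hne hx0 hy0)
  · have hy0 : c' y ≠ 0 := by
      intro hy0
      simp only [hx0, hy0, if_true, if_false, reduceCtorEq] at hxy
    have hratio : c x / c' x = c y / c' y := by
      simpa only [hx0, hy0, if_false, Option.some.injEq] using hxy
    set t := c x / c' x
    have hu : c - t • c' = 0 := by
      refine hsep _ (K.sub_mem hc (K.smul_mem t hc')) x hx y hy hne ?_ ?_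
      · simp [t, div_mul_cancel₀ _ hx0]
      · simp [hratio, div_mul_cancel₀ _ hy0]
    exact hnprop t (sub_eq_zero.mp hu)

variable [Fintype F]

theorem ncard_le_card_add_one_of_dependencies (K : Submodule F (α →₀ F)) (T : Set α)
    (hsep : ∀ u ∈ K, ∀ i ∈ T, ∀ j ∈ T, i ≠ j → u i = 0 → u j = 0 → u = 0)
    (hzero : ∀ i ∈ T, ∃ u ∈ K, u ≠ 0 ∧ u i = 0) :
    T.ncard ≤ Fintype.card F + 1 := by
  by_cases hT : T.ncard ≤ 1
  · omega
  obtain ⟨a, b, ha, hb, hab⟩ :=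
    (Set.one_lt_ncard_iff (s := T) (Set.finite_of_ncard_pos (by omega))).mp (by omega)
  obtain ⟨c, hc, hc0, hca⟩ := hzero a ha
  obtain ⟨c', hc', hc'0, hc'b⟩ := hzero b hb
  have hc'a : c' a ≠ 0 := fun h => hc'0 (hsep c' hc' a ha b hb hab h hc'b)
  have hnprop : ∀ t : F, c ≠ t • c' := by
    rintro t rfl
    have ht : t = 0 := by simpa [hc'a] using hca
    exact hc0 (by simp [ht])
  classical
  have hinj := (injOn_ratio hsep hc hc' hc'0 hnprop).injective
  calc T.ncard = Nat.card T := (Nat.card_coe_set_eq T).symm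
    _ ≤ Nat.card (Option F) := Nat.card_le_card_of_injective _ hinj
    _ = Fintype.card F + 1 := by rw [Nat.card_eq_fintype_card, Fintype.card_option]

theorem ncard_le_card_add_one_of_linearIndepOn {V : Type*} [AddCommGroup V] [Module F V]
    (w : α → V) (T : Set α)
    (hpair : ∀ i ∈ T, ∀ j ∈ T, i ≠ j → LinearIndepOn F w (T \ {i, j}))
    (hsingle : ∀ i ∈ T, ¬ LinearIndepOn F w (T \ {i})) :
    T.ncard ≤ Fintype.card F + 1 := by
  refine ncard_le_card_add_one_of_dependencies
    (LinearMap.ker (Finsupp.linearCombination F w) ⊓ Finsupp.supported F F T) T ?_ ?_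
  · rintro u ⟨hu, huT⟩ i hi j hj hij hui huj
    refine linearIndepOn_iff.mp (hpair i hi j hj hij) u ?_ hu
    rw [SetLike.mem_coe, Finsupp.mem_supported'] at huT
    rw [Finsupp.mem_supported']
    intro x hx
    by_cases hxT : x ∈ T
    · obtain rfl | rfl : x = i ∨ x = j := by
        simp only [mem_sdiff, hxT, mem_insert_iff, mem_singleton_iff, true_and, not_not] at hx
        exact hx
      exacts [hui, huj]
    · exact huT x hxT
  · intro i hi
    obtain ⟨u, hu, hlin, hu0⟩ := by simpa [linearIndepOn_iff] using hsingle i hi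
    refine ⟨u, ⟨hlin, Finsupp.supported_mono sdiff_subset hu⟩, hu0, ?_⟩
    exact (Finsupp.mem_supported' F u).mp hu i (by simp)

end Dependencies

section Rank

variable {M : Matroid α}

lemma rank_eq_ncard_of_isBase {B : Set α} (hB : M.IsBase B) : rank M = B.ncard := by
  refine le_antisymm (Nat.sInf_le ⟨B, hB, rfl⟩) (le_csInf ⟨_, B, hB, rfl⟩ ?_)
  rintro m ⟨B', hB', rfl⟩
  exact (hB.ncard_eq_ncard_of_isBase hB').le

lemma rankFinite_of_rank_pos (h : 0 < rank M) : M.RankFinite := by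
  obtain ⟨B, hB⟩ := M.exists_isBase
  exact hB.rankFinite_of_finite (Set.finite_of_ncard_pos (rank_eq_ncard_of_isBase hB ▸ h))

lemma rank_dual [M.RankFinite] : rank M✶ = M.E.ncard - rank M := by
  obtain ⟨B, hB⟩ := M.exists_isBase
  rw [rank_eq_ncard_of_isBase hB.compl_isBase_dual, rank_eq_ncard_of_isBase hB,
    Set.ncard_sdiff hB.subset_ground hB.finite]

lemma isBase_of_indep_of_rank_le_ncard [M.RankFinite] {I : Set α} (hI : M.Indep I)
    (h : rank M ≤ I.ncard) : M.IsBase I := by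
  obtain ⟨B, hB, hIB⟩ := hI.exists_isBase_superset
  rwa [Set.eq_of_subset_of_ncard_le hIB (rank_eq_ncard_of_isBase hB ▸ h) hB.finite]

end Rank

section Paving

variable {M : Matroid α}

lemma Paving.indep_of_ncard_lt (hM : Paving M) {X : Set α} (hXE : X ⊆ M.E) (hX : X.Finite)
    (hlt : X.ncard < rank M) : M.Indep X := by
  by_contra hdep
  obtain ⟨C, hCX, hC⟩ := (M.not_indep_iff hXE).mp hdep |>.exists_isCircuit_subset
  have hcirc : Circuit M C := ⟨hC.dep, fun D hD hDC => (Matroid.isCircuit_iff.mp hC).2 hD hDC⟩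
  exact (hM C hcirc).trans (Set.ncard_le_ncard hCX hX) |>.not_gt hlt

theorem Paving.ncard_le_rank_of_not_spanning (hM : Paving M) {F : Type*} [Field F] [Fintype F]
    (hrep : Representable M F) (hrank : Fintype.card F < rank M) {S : Set α}
    (hSE : S ⊆ M.E) (hS : ¬ M.Spanning S) : S.ncard ≤ rank M := by
  have : M.RankFinite := rankFinite_of_rank_pos (by omega)
  by_contra! hlarge
  obtain ⟨T, hTS, hTcard⟩ := Set.exists_subset_card_eq (Nat.succ_le_of_lt hlarge)
  have hT : T.Finite := Set.finite_of_ncard_pos (by omega)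
  have hTE : T ⊆ M.E := hTS.trans hSE
  obtain ⟨ι, v, hv⟩ := hrep
  have hbound := ncard_le_card_add_one_of_linearIndepOn (F := F) v T ?_ ?_
  · omega
  · intro i hi j hj hij
    refine (hv _ (sdiff_subset.trans hTE)).mp
      (hM.indep_of_ncard_lt (sdiff_subset.trans hTE) hT.sdiff ?_)
    rw [Set.ncard_sdiff (Set.pair_subset hi hj), Set.ncard_pair hij]
    omega
  · intro i hi hlin
    have hbase := isBase_of_indep_of_rank_le_ncard ((hv _ (sdiff_subset.trans hTE)).mpr hlin)
      (by rw [Set.ncard_sdiff_singleton_of_mem hi]; omega)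
    exact hS (hbase.spanning.superset (sdiff_subset.trans hTS))

end Paving

theorem paving_sparse_or_small_rank_general {α : Type*} (q : ℕ) (F : Type) [Field F]
    [Fintype F] (hq : Fintype.card F = q) (M : Matroid α)
    (hrep : Representable M F) (hpaving : Paving M) :
    rank M ≤ q ∨ (Paving M ∧ Paving M.dual) := by
  refine (le_or_gt (rank M) q).imp id fun hrank => ⟨hpaving, fun C hC => ?_⟩
  have : M.RankFinite := rankFinite_of_rank_pos (by omega)
  have hCE : C ⊆ M.E := hC.1.subset_ground
  have hH : ¬ M.Spanning (M.E \ C) := by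
    rw [← Matroid.coindep_iff_compl_spanning]
    exact hC.1.not_indep
  have hHcard := hpaving.ncard_le_rank_of_not_spanning hrep (hq ▸ hrank) sdiff_subset hH
  have hcover := Set.ncard_union_le C (M.E \ C)
  rw [Set.union_sdiff_cancel hCE] at hcover
  rw [rank_dual]
  omega

/-- Proposition 4.4: a simple `GF(q)`-representable paving matroid
with no coloops has rank at most `q`, or is sparse paving (both it and its dual are
paving). -/
theorem paving_sparse_or_small_rank {α : Type*} (q : ℕ) (F : Type) [Field F]
    [Fintype F] (hq : Fintype.card F = q) (M : Matroid α) (hsimple : Simple M)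
    (hrep : Representable M F) (hpaving : Paving M) (hcoloops : NoColoops M) :
    rank M ≤ q ∨ (Paving M ∧ Paving M.dual) :=
  paving_sparse_or_small_rank_general q F hq M hrep hpaving

end LoosePaper
end

section
/- Assume the ternary representation setup. Then the number of columns of type 1 in Q other than e^P is at most 2r − 2. -/
/-!
A column of type 1 has the shape `a • (ε_0 + c • ε_i)` with `a, c ≠ 0` and `i ≠ 0`, so up to
scaling it is determined by the pair `(i, c)`, for which there are `(r - 1) * 2` choices over
`GF(3)`. Two columns that are scalar multiples of each other form a dependent pair, which a
simple matroid does not have; hence distinct type-1 columns give distinct pairs.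
-/

namespace LoosePaper

open Set
open scoped Matroid

variable {α β : Type*}

section

variable {ι F : Type*} [Field F]

theorem Simple.eq_of_eq_smul {M : Matroid α} (hM : Simple M) {v : α → ι → F}
    (hrep : ∀ I, I ⊆ M.E → (M.Indep I ↔ LinearIndepOn F v I))
    {f g : α} (hf : f ∈ M.E) (hg : g ∈ M.E) {c : F} (h : v g = c • v f) : f = g := by
  by_contra hfg
  have hpair : LinearIndepOn F v {f, g} :=
    (hrep _ (pair_subset hf hg)).mp (hM f hf g hg)
  have hdep : c • v f + (-1 : F) • v g = 0 := by rw [h]; module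
  exact one_ne_zero (neg_eq_zero.mp ((LinearIndepOn.pair_iff v hfg).mp hpair c (-1) hdep).2)

/-- The shape of a column of type 1, with `z` the distinguished row. -/
def IsTypeOne (z : ι) (x : ι → F) : Prop :=
  x z ≠ 0 ∧ {i | i ≠ z ∧ x i ≠ 0}.ncard = 1

theorem IsTypeOne.exists_inv_smul_eq [DecidableEq ι] {z : ι} {x : ι → F} (hx : IsTypeOne z x) :
    ∃ k ≠ z, ∃ c ≠ 0, (x z)⁻¹ • x = Pi.single z 1 + Pi.single k c := by
  obtain ⟨hz, hone⟩ := hx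
  obtain ⟨k, hsupp⟩ := ncard_eq_one.mp hone
  have hk : k ∈ {i | i ≠ z ∧ x i ≠ 0} := hsupp ▸ mem_singleton k
  refine ⟨k, hk.1, (x z)⁻¹ * x k, mul_ne_zero (inv_ne_zero hz) hk.2, funext fun j => ?_⟩
  by_cases hjz : j = z
  · subst hjz
    simp [hz, hk.1.symm]
  by_cases hjk : j = k
  · subst hjk
    simp [hjz]
  have hxj : x j = 0 := by
    by_contra hxj
    have hj : j ∈ {i | i ≠ z ∧ x i ≠ 0} := ⟨hjz, hxj⟩
    exact hjk (by rwa [hsupp] at hj)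
  simp [hxj, hjz, hjk]

theorem ncard_le_of_forall_isTypeOne [Fintype ι] [Fintype F] {S : Set α} {v : α → ι → F}
    {z : ι} (hS : ∀ f ∈ S, IsTypeOne z (v f))
    (hv : ∀ f ∈ S, ∀ g ∈ S, ∀ c : F, v g = c • v f → f = g) :
    S.ncard ≤ (Fintype.card ι - 1) * (Fintype.card F - 1) := by
  classical
  let normalize : α → ι → F := fun f => (v f z)⁻¹ • v f
  let t : Finset (ι × F) := (Finset.univ.erase z) ×ˢ (Finset.univ.erase 0)
  let w : ι × F → ι → F := fun p => Pi.single z 1 + Pi.single p.1 p.2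
  have hmaps : MapsTo normalize S (t.image w : Set (ι → F)) := by
    intro f hf
    obtain ⟨k, hkz, c, hc, heq⟩ := (hS f hf).exists_inv_smul_eq
    exact Finset.mem_coe.mpr (Finset.mem_image.mpr ⟨(k, c), by simp [t, hkz, hc], heq.symm⟩)
  have hinj : InjOn normalize S := by
    intro f hf g hg hfg
    refine hv f hf g hg (v g z * (v f z)⁻¹) ?_
    calc v g = v g z • normalize g := by simp [normalize, smul_smul, (hS g hg).1]
      _ = (v g z * (v f z)⁻¹) • v f := by rw [← hfg, smul_smul]
  calc S.ncard ≤ (t.image w : Set (ι → F)).ncard :=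
        ncard_le_ncard_of_injOn normalize hmaps hinj (Finset.finite_toSet _)
    _ ≤ t.card := by rw [ncard_coe_finset]; exact Finset.card_image_le
    _ = (Fintype.card ι - 1) * (Fintype.card F - 1) := by
        simp [t, Finset.card_product, Finset.card_erase_of_mem]

end

/-- Sublemma 3.2.6: in the ternary representation setup, the
number of columns of type 1 in `Q` other than `e^P` is at most `2r - 2`. -/
theorem ternary_setup_type_one {α : Type*} (r : ℕ) (hr : 5 ≤ r) (M : Matroid α) (hsimple : Simple M)
    (e : α)
    (v : α → Fin r → ZMod 3)
    (hrep : ∀ I, I ⊆ M.E →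
      (M.Indep I ↔ LinearIndependent (ZMod 3) (fun x : I => v x.1)))
    (b : Fin r → α) :
    {f | f ∈ M.E ∧ f ∉ Set.range b ∧ f ≠ e ∧ v f ⟨0, by omega⟩ ≠ 0 ∧
      {i : Fin r | i ≠ ⟨0, by omega⟩ ∧ v f i ≠ 0}.ncard = 1}.ncard ≤ 2 * r - 2 := by
  calc _ ≤ (Fintype.card (Fin r) - 1) * (Fintype.card (ZMod 3) - 1) :=
        ncard_le_of_forall_isTypeOne (fun f hf => hf.2.2.2)
          (fun f hf g hg _ h => hsimple.eq_of_eq_smul hrep hf.1 hg.1 h)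
    _ = 2 * r - 2 := by rw [Fintype.card_fin, ZMod.card]; omega

end LoosePaper
end
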